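/- If z_1, z_2, ..., z_N are complex numbers, then there exists a subset S of {1, 2, ..., N} such that |∑_{k∈S} z_k| ≥ (1/π) · ∑_{k=1}^{N} |z_k|. -/

import Mathlib

open Real intervalIntegral

theorem cosPos_integral (a : ℝ) :
    ∫ θ in (0:ℝ)..(2*π), max (Real.cos (θ - a)) 0 = 2 := by
  have h1 : (∫ θ in (0:ℝ)..(2*π), max (Real.cos (θ - a)) 0)
      = ∫ θ in (0-a:ℝ)..(2*π - a), max (Real.cos θ) 0 :=
    intervalIntegral.integral_comp_sub_right (fun θ => max (Real.cos θ) 0) a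
  have hper : Function.Periodic (fun θ => max (Real.cos θ) 0) (2*π) := fun x => by
    simp [Real.cos_add_two_pi]
  have h2 : (∫ θ in (0-a:ℝ)..(0-a + 2*π), max (Real.cos θ) 0)
      = ∫ θ in (-(π/2):ℝ)..(-(π/2) + 2*π), max (Real.cos θ) 0 :=
    hper.intervalIntegral_add_eq (0-a) (-(π/2))
  have e1 : (2*π - a) = 0 - a + 2*π := by ring
  rw [h1, e1, h2]
  have e2 : (-(π/2) + 2*π) = 3*π/2 := by ring
  rw [e2]
  have hsplit : (∫ θ in (-(π/2):ℝ)..(3*π/2), max (Real.cos θ) 0)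
      = (∫ θ in (-(π/2):ℝ)..(π/2), max (Real.cos θ) 0)
        + ∫ θ in (π/2:ℝ)..(3*π/2), max (Real.cos θ) 0 := by
    rw [intervalIntegral.integral_add_adjacent_intervals] <;>
      exact (Continuous.intervalIntegrable (by continuity) _ _)
  have hA : (∫ θ in (-(π/2):ℝ)..(π/2), max (Real.cos θ) 0) = 2 := by
    have : (∫ θ in (-(π/2):ℝ)..(π/2), max (Real.cos θ) 0)
        = ∫ θ in (-(π/2):ℝ)..(π/2), Real.cos θ := by
      apply intervalIntegral.integral_congr
      intro x hx
      rw [Set.uIcc_of_le (by linarith [Real.pi_pos])] at hx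
      exact max_eq_left (Real.cos_nonneg_of_mem_Icc ⟨hx.1, hx.2⟩)
    rw [this, integral_cos]
    simp [Real.sin_pi_div_two]
    ring
  have hB : (∫ θ in (π/2:ℝ)..(3*π/2), max (Real.cos θ) 0) = 0 := by
    have : (∫ θ in (π/2:ℝ)..(3*π/2), max (Real.cos θ) 0)
        = ∫ θ in (π/2:ℝ)..(3*π/2), (0:ℝ) := by
      apply intervalIntegral.integral_congr
      intro x hx
      rw [Set.uIcc_of_le (by linarith [Real.pi_pos])] at hx
      refine max_eq_right ?_
      have h3 : x - π ∈ Set.Icc (-(π/2)) (π/2) :=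
        ⟨by linarith [hx.1], by linarith [hx.2]⟩
      have := Real.cos_nonneg_of_mem_Icc h3
      rw [Real.cos_sub_pi] at this; linarith
    simp [this]
  rw [hsplit, hA, hB]; ring

theorem re_exp_neg (θ : ℝ) (z : ℂ) :
    (Complex.exp (-(θ:ℂ) * Complex.I) * z).re
      = ‖z‖ * Real.cos (θ - Complex.arg z) := by
  rcases eq_or_ne z 0 with rfl | hz
  · simp
  · rw [Real.cos_sub]
    have hc := Complex.cos_arg hz
    have hs := Complex.sin_arg z
    have habs : (‖z‖ : ℝ) ≠ 0 := norm_ne_zero_iff.mpr hz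
    rw [Complex.exp_mul_I]
    simp [Complex.add_re, Complex.mul_re, Complex.cos_ofReal_re, Complex.sin_ofReal_re,
      Complex.cos_ofReal_im, Complex.sin_ofReal_im, hc, hs]
    try field_simp
    try ring

theorem subset_sum_modulus_ge (N : ℕ) (z : Fin N → ℂ) :
    ∃ S : Finset (Fin N),
      (1 / Real.pi) * ∑ k : Fin N, ‖z k‖ ≤ ‖∑ k ∈ S, z k‖ := by
  set f : ℝ → ℝ := fun θ => ∑ k : Fin N, ‖z k‖ * max (Real.cos (θ - Complex.arg (z k))) 0 with hf
  have hcont : Continuous f := by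
    apply continuous_finset_sum
    intro k _
    exact continuous_const.mul ((Real.continuous_cos.comp (continuous_sub_right _)).max continuous_const)
  have hint : (∫ θ in (0:ℝ)..(2*π), f θ) = 2 * ∑ k : Fin N, ‖z k‖ := by
    rw [hf]
    have hik : ∀ k : Fin N, IntervalIntegrable
        (fun θ => ‖z k‖ * max (Real.cos (θ - Complex.arg (z k))) 0)
        MeasureTheory.volume 0 (2*π) :=
      fun k => Continuous.intervalIntegrable (by fun_prop) _ _
    rw [intervalIntegral.integral_finset_sum (fun k _ => hik k)]
    rw [Finset.mul_sum]
    refine Finset.sum_congr rfl fun k _ => ?_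
    rw [intervalIntegral.integral_const_mul, cosPos_integral]
    ring
  -- max point
  have hne : (Set.Icc (0:ℝ) (2*π)).Nonempty := ⟨0, by constructor <;> [rfl; positivity]⟩
  obtain ⟨θ₀, hθ₀, hmax⟩ := isCompact_Icc.exists_isMaxOn hne hcont.continuousOn
  have hπ := Real.pi_pos
  have hle : 2 * ∑ k : Fin N, ‖z k‖ ≤ (2*π) * f θ₀ := by
    rw [← hint]
    calc (∫ θ in (0:ℝ)..(2*π), f θ) ≤ ∫ _ in (0:ℝ)..(2*π), f θ₀ := by
          apply intervalIntegral.integral_mono_on (by positivity)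
            (hcont.intervalIntegrable _ _) intervalIntegrable_const
          intro x hx; exact hmax hx
      _ = (2*π) * f θ₀ := by simp [mul_comm]
  have hkey : (1/π) * ∑ k : Fin N, ‖z k‖ ≤ f θ₀ := by
    rw [div_mul_eq_mul_div, one_mul, div_le_iff₀ hπ]
    nlinarith
  -- the subset
  refine ⟨Finset.univ.filter (fun k => 0 < (Complex.exp (-(θ₀:ℂ) * Complex.I) * z k).re), ?_⟩
  set S := Finset.univ.filter (fun k => 0 < (Complex.exp (-(θ₀:ℂ) * Complex.I) * z k).re) with hS
  have h1 : f θ₀ = ∑ k ∈ S, (Complex.exp (-(θ₀:ℂ) * Complex.I) * z k).re := by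
    rw [hf]
    have : ∀ k : Fin N, ‖z k‖ * max (Real.cos (θ₀ - Complex.arg (z k))) 0
        = max ((Complex.exp (-(θ₀:ℂ) * Complex.I) * z k).re) 0 := by
      intro k
      rw [re_exp_neg, mul_max_of_nonneg _ _ (norm_nonneg _), mul_zero]
    simp_rw [this]
    rw [hS, Finset.sum_filter]
    refine Finset.sum_congr rfl fun k _ => ?_
    split_ifs with h
    · exact max_eq_left h.le
    · exact max_eq_right (not_lt.mp h)
  have h2 : (∑ k ∈ S, (Complex.exp (-(θ₀:ℂ) * Complex.I) * z k).re)
      = (Complex.exp (-(θ₀:ℂ) * Complex.I) * ∑ k ∈ S, z k).re := by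
    rw [Finset.mul_sum, Complex.re_sum]
  have h3 : (Complex.exp (-(θ₀:ℂ) * Complex.I) * ∑ k ∈ S, z k).re
      ≤ ‖∑ k ∈ S, z k‖ := by
    calc (Complex.exp (-(θ₀:ℂ) * Complex.I) * ∑ k ∈ S, z k).re
        ≤ ‖Complex.exp (-(θ₀:ℂ) * Complex.I) * ∑ k ∈ S, z k‖ :=
          Complex.re_le_norm _
      _ = ‖∑ k ∈ S, z k‖ := by
          rw [norm_mul]
          have : ‖Complex.exp (-(θ₀:ℂ) * Complex.I)‖ = 1 := by
            rw [show -(θ₀:ℂ) * Complex.I = ((-θ₀:ℝ):ℂ) * Complex.I by push_cast; ring,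
              Complex.norm_exp_ofReal_mul_I]
          rw [this, one_mul]
  linarith [hkey, h1 ▸ h2 ▸ h3]
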